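/- arXiv:2001.03174 — 5 statements merged into one kernel-verified Lean document; each statement's English description precedes it below -/
import Mathlib

section
/- Let X and Y be finite nonempty sets, let (W_s)_{s∈S} be an arbitrary family of channels from X to Y (i.e., for each s, W_s(x,·) is a probability distribution on Y for every x ∈ X), and let P be a probability distribution on X. Then for every δ > 0 there exists J_δ ∈ ℕ such that (W_s)_{s∈S} can be (δ,J_δ)-approximated under P. -/
open MeasureTheory ProbabilityTheory ENNReal Filter

noncomputable section
open scoped Classical

/-- Kullback–Leibler divergence `D(μ‖ν) = ∫ log (dμ/dν) dμ`, valued in `[0,∞]`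
(`∞` when the log-density is not integrable). -/
def KLdiv {Y : Type*} [MeasurableSpace Y] (μ ν : Measure Y) : ℝ≥0∞ :=
  if Integrable (fun y => Real.log (μ.rnDeriv ν y).toReal) μ then
    ENNReal.ofReal (∫ y, Real.log (μ.rnDeriv ν y).toReal ∂μ)
  else ∞

/-- Rényi divergence `D_α(μ‖ν) = (α-1)⁻¹ log ∫ (dμ/dν)^α dν`, valued in `[0,∞]`,
`∞` when the integral is infinite (α>1) or zero (α<1). -/
def RenyiDiv {Y : Type*} [MeasurableSpace Y] (α : ℝ) (μ ν : Measure Y) : ℝ≥0∞ :=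
  if (1 < α ∧ ∫⁻ y, μ.rnDeriv ν y ^ α ∂ν = ∞) ∨ (α < 1 ∧ ∫⁻ y, μ.rnDeriv ν y ^ α ∂ν = 0) then ∞
  else ENNReal.ofReal ((α - 1)⁻¹ * Real.log (∫⁻ y, μ.rnDeriv ν y ^ α ∂ν).toReal)

/-- Output marginal `Q_{P,W} = ∫ W(x,·) dP(x)`. -/
def outputM {X Y : Type*} [MeasurableSpace X] [MeasurableSpace Y]
    (P : Measure X) (W : Kernel X Y) : Measure Y := P.bind (fun x => W x)

/-- Mutual information `I(P,W) = D(P ⊗ W ‖ P × Q_{P,W})`. -/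
def mutInfo {X Y : Type*} [MeasurableSpace X] [MeasurableSpace Y]
    (P : Measure X) (W : Kernel X Y) : ℝ≥0∞ :=
  KLdiv (P.compProd W) (P.prod (outputM P W))

/-- The defining property of a `(δ,J)`-approximating family `V` of the compound
channel `(W s)_{s ∈ S}` under input distribution `P`. -/
def ApproxFam {X Y S : Type*} [MeasurableSpace X] [MeasurableSpace Y]
    (P : Measure X) (W : S → Kernel X Y) (δ : ℝ) {J : ℕ} (V : Fin J → Kernel X Y) : Prop :=
  (∀ s : S, ∃ j : Fin J,
      (∫⁻ x, KLdiv (W s x) (V j x) ∂P) ≤ ENNReal.ofReal δ ∧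
      (∃ α : ℝ, 1 < α ∧ ∀ x : X, RenyiDiv α (W s x) (V j x) < ∞) ∧
      mutInfo P (V j) - mutInfo P (W s) ≤ ENNReal.ofReal δ) ∧
  (∀ j : Fin J, ∃ s : S, mutInfo P (W s) - mutInfo P (V j) ≤ ENNReal.ofReal δ)

/-- The compound channel `(W s)_{s ∈ S}` can be `(δ,J)`-approximated under `P`. -/
def CanApprox {X Y S : Type*} [MeasurableSpace X] [MeasurableSpace Y]
    (P : Measure X) (W : S → Kernel X Y) (δ : ℝ) (J : ℕ) : Prop :=
  ∃ V : Fin J → Kernel X Y, (∀ j, IsMarkovKernel (V j)) ∧ ApproxFam P W δ V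

/-- The `(P,n,R)`-ensemble of random codebooks: `M` codewords drawn i.i.d. from `P^⊗n`. -/
def ensemble {X : Type*} [MeasurableSpace X] (P : Measure X) (n M : ℕ) :
    Measure (Fin M → Fin n → X) :=
  Measure.pi (fun _ => Measure.pi (fun _ => P))

/-- The cost-constrained codebook: codewords violating `∑ c ≤ n C` are replaced by `(x₀,…,x₀)`. -/
def constrainCB {X : Type*} (c : X → ℝ) (Cmax : ℝ) (x₀ : X) {n M : ℕ}
    (cb : Fin M → Fin n → X) : Fin M → Fin n → X :=
  fun m => if ∑ j, c (cb m j) ≤ n * Cmax then cb m else fun _ => x₀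

/-- Total variation norm `‖μ - ν‖` of the difference of two (finite) measures,
via the Jordan decomposition (`Measure.sub` is the positive part). -/
def tvDist {Z : Type*} [MeasurableSpace Z] (μ ν : Measure Z) : ℝ≥0∞ :=
  (μ - ν) Set.univ + (ν - μ) Set.univ

/-! Identify a channel with its transition matrix, a point of the compact set of stochastic
matrices, on which mutual information is a continuous and hence uniformly continuous function.
Take a finite net of the transition matrices of the `W s` and mix each net point with a little of
the uniform distribution on `Y`. The mixture has full support, so every Rényi divergence into it is
finite, and it dominates every nearby `W s` up to a factor `1 + 2ε`, which bounds the
Kullback–Leibler divergence by `log (1 + 2ε) ≤ 2ε`. -/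

section FiniteMeasures

variable {Z : Type*} [MeasurableSpace Z]

lemma absolutelyContinuous_of_forall_singleton [Countable Z] {μ ν : Measure Z}
    (h : ∀ z, ν {z} = 0 → μ {z} = 0) : μ ≪ ν := by
  intro s hs
  have hz : ∀ z ∈ s, μ {z} = 0 := fun z hzs =>
    h z (measure_mono_null (Set.singleton_subset_iff.2 hzs) hs)
  simpa [Set.biUnion_of_singleton] using (measure_biUnion_null_iff s.to_countable).2 hz

variable [MeasurableSingletonClass Z]

lemma rnDeriv_ae_eq_div_singleton [Countable Z] (μ ν : Measure Z) [IsFiniteMeasure ν]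
    (hμν : μ ≪ ν) : μ.rnDeriv ν =ᵐ[ν] fun z => μ {z} / ν {z} := by
  have hμ : ν.withDensity (fun z => μ {z} / ν {z}) = μ := by
    refine Measure.ext_of_singleton fun z => ?_
    rw [withDensity_apply _ (measurableSet_singleton z), lintegral_singleton]
    rcases eq_or_ne (ν {z}) 0 with h0 | h0
    · simp [h0, hμν h0]
    · exact ENNReal.div_mul_cancel h0 (measure_ne_top ν _)
  have := Measure.rnDeriv_withDensity ν (measurable_of_countable fun z => μ {z} / ν {z})
  rwa [hμ] at this

variable [Fintype Z]

lemma KLdiv_eq_sum (μ ν : Measure Z) [IsFiniteMeasure μ] [IsFiniteMeasure ν] (hμν : μ ≪ ν) :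
    KLdiv μ ν = ENNReal.ofReal (∑ z, μ.real {z} * Real.log (μ.real {z} / ν.real {z})) := by
  have hInt : Integrable (fun z => Real.log (μ.rnDeriv ν z).toReal) μ := .of_finite
  rw [KLdiv, if_pos hInt, integral_congr_ae ((hμν.ae_eq (rnDeriv_ae_eq_div_singleton μ ν hμν)).mono
    fun z hz => by rw [hz]), integral_fintype .of_finite]
  simp only [smul_eq_mul, ENNReal.toReal_div, Measure.real]

lemma KLdiv_le_log_of_le_mul (μ ν : Measure Z) [IsProbabilityMeasure μ] [IsFiniteMeasure ν]
    {C : ℝ} (h : ∀ z, μ.real {z} ≤ C * ν.real {z}) :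
    KLdiv μ ν ≤ ENNReal.ofReal (Real.log C) := by
  have hμν : μ ≪ ν := absolutelyContinuous_of_forall_singleton fun z hz =>
    (measureReal_eq_zero_iff (measure_ne_top μ _)).1
      (le_antisymm (by simpa [measureReal_def, hz] using h z) measureReal_nonneg)
  rw [KLdiv_eq_sum μ ν hμν]
  refine ENNReal.ofReal_le_ofReal ?_
  calc ∑ z, μ.real {z} * Real.log (μ.real {z} / ν.real {z})
      ≤ ∑ z, μ.real {z} * Real.log C := Finset.sum_le_sum fun z _ => by
        rcases (measureReal_nonneg : 0 ≤ μ.real {z}).eq_or_lt with h0 | hpos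
        · simp [← h0]
        have hν : 0 < ν.real {z} := measureReal_nonneg.lt_of_ne fun h0 => by
          simpa [← h0] using hpos.trans_le (h z)
        gcongr
        exact (div_le_iff₀ hν).2 (h z)
    _ = Real.log C := by
        rw [← Finset.sum_mul, sum_measureReal_singleton, Finset.coe_univ, probReal_univ, one_mul]

lemma RenyiDiv_lt_top_of_forall_ne_zero (μ ν : Measure Z) [IsFiniteMeasure μ] [IsFiniteMeasure ν]
    {α : ℝ} (hα : 1 < α) (hν : ∀ z, ν {z} ≠ 0) : RenyiDiv α μ ν < ∞ := by
  have hμν : μ ≪ ν := absolutelyContinuous_of_forall_singleton fun z hz => absurd hz (hν z)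
  have hfin : ∫⁻ z, μ.rnDeriv ν z ^ α ∂ν ≠ ∞ := by
    rw [lintegral_congr_ae ((rnDeriv_ae_eq_div_singleton μ ν hμν).mono fun z hz => by rw [hz]),
      lintegral_fintype]
    exact ENNReal.sum_ne_top.2 fun z _ => ENNReal.mul_ne_top
      (ENNReal.rpow_ne_top_of_nonneg (by linarith) (ENNReal.div_ne_top (measure_ne_top μ _) (hν z)))
      (measure_ne_top ν _)
  rw [RenyiDiv, if_neg (by rintro (⟨_, h⟩ | ⟨h, _⟩) <;> [exact hfin h; linarith])]
  exact ENNReal.ofReal_lt_top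

end FiniteMeasures

section StochasticMatrices

variable {X Y : Type*} [Fintype Y]

variable (X Y) in
def stochasticMatrices : Set (X → Y → ℝ) := {M | (∀ x y, 0 ≤ M x y) ∧ ∀ x, ∑ y, M x y = 1}

lemma le_one_of_mem_stochasticMatrices {M : X → Y → ℝ} (hM : M ∈ stochasticMatrices X Y)
    (x : X) (y : Y) : M x y ≤ 1 :=
  hM.2 x ▸ Finset.single_le_sum (fun y _ => hM.1 x y) (Finset.mem_univ y)

lemma isCompact_stochasticMatrices : IsCompact (stochasticMatrices X Y) := by
  have hclosed : IsClosed (stochasticMatrices X Y) := by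
    simp only [stochasticMatrices, Set.ofPred_and, Set.ofPred_forall]
    exact (isClosed_iInter fun x => isClosed_iInter fun y => isClosed_le continuous_const
      (by fun_prop)).inter (isClosed_iInter fun x => isClosed_eq (by fun_prop) continuous_const)
  exact (isCompact_univ_pi fun _ => isCompact_univ_pi fun _ => isCompact_Icc).of_isClosed_subset
    hclosed fun M hM => Set.mem_univ_pi.2 fun x => Set.mem_univ_pi.2 fun y =>
      ⟨hM.1 x y, le_one_of_mem_stochasticMatrices hM x y⟩

variable [Fintype X]

lemma lt_add_of_dist_lt {M N : X → Y → ℝ} {r : ℝ} (h : dist M N < r) (x : X) (y : Y) :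
    M x y < N x y + r := by
  have := ((dist_le_pi_dist (M x) (N x) y).trans (dist_le_pi_dist M N x)).trans_lt h
  rw [Real.dist_eq] at this
  linarith [le_abs_self (M x y - N x y)]

/-- `H(pM) - ∑ₓ p(x) H(M(x,·))`, the mutual information of the channel with transition matrix `M`
under the input distribution `p`, written so that it is visibly continuous in `M`. -/
def mutualInfoOfMatrix (p : X → ℝ) (M : X → Y → ℝ) : ℝ :=
  ∑ y, Real.negMulLog (∑ x, p x * M x y) - ∑ x, p x * ∑ y, Real.negMulLog (M x y)

lemma continuous_mutualInfoOfMatrix (p : X → ℝ) : Continuous (mutualInfoOfMatrix (Y := Y) p) := by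
  unfold mutualInfoOfMatrix
  fun_prop

lemma uniformContinuousOn_mutualInfoOfMatrix (p : X → ℝ) :
    UniformContinuousOn (mutualInfoOfMatrix (Y := Y) p) (stochasticMatrices X Y) :=
  isCompact_stochasticMatrices.uniformContinuousOn_of_continuous
    (continuous_mutualInfoOfMatrix p).continuousOn

end StochasticMatrices

section MixUniform

variable {X Y : Type*} [Fintype Y]

def mixUniform (ε : ℝ) (M : X → Y → ℝ) : X → Y → ℝ :=
  fun x y => (1 - ε) * M x y + ε / Fintype.card Y

variable [Nonempty Y] {ε : ℝ} {M : X → Y → ℝ}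

lemma mixUniform_pos (hM : ∀ x y, 0 ≤ M x y) (hε0 : 0 < ε) (hε1 : ε ≤ 1) (x : X) (y : Y) :
    0 < mixUniform ε M x y :=
  add_pos_of_nonneg_of_pos (mul_nonneg (by linarith) (hM x y)) (by positivity)

lemma mixUniform_mem (hM : M ∈ stochasticMatrices X Y) (hε0 : 0 ≤ ε) (hε1 : ε ≤ 1) :
    mixUniform ε M ∈ stochasticMatrices X Y := by
  refine ⟨fun x y => add_nonneg (mul_nonneg (by linarith) (hM.1 x y)) (by positivity), fun x => ?_⟩
  simp only [mixUniform, Finset.sum_add_distrib, ← Finset.mul_sum, hM.2 x, Finset.sum_const,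
    Finset.card_univ, nsmul_eq_mul]
  field_simp
  ring

lemma dist_mixUniform_le [Fintype X] (hM : M ∈ stochasticMatrices X Y) (hε0 : 0 ≤ ε) :
    dist (mixUniform ε M) M ≤ ε := by
  refine dist_pi_le_iff hε0 |>.2 fun x => dist_pi_le_iff hε0 |>.2 fun y => ?_
  have hk : (0 : ℝ) < (Fintype.card Y : ℝ)⁻¹ := by positivity
  have hk1 : (Fintype.card Y : ℝ)⁻¹ ≤ 1 :=
    inv_le_one_of_one_le₀ (by exact_mod_cast Fintype.card_pos)
  have h01 := le_one_of_mem_stochasticMatrices hM x y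
  rw [Real.dist_eq, mixUniform, show (1 - ε) * M x y + ε / Fintype.card Y - M x y
    = ε * ((Fintype.card Y : ℝ)⁻¹ - M x y) by ring, abs_mul, abs_of_nonneg hε0]
  exact mul_le_of_le_one_right hε0 (abs_le.2 ⟨by linarith [hM.1 x y], by linarith [hM.1 x y]⟩)

lemma le_mul_mixUniform (hM : ∀ x y, 0 ≤ M x y) (hε0 : 0 ≤ ε) (hε : ε ≤ 1 / 2) {x : X} {y : Y}
    {a : ℝ} (ha : a ≤ M x y + ε / Fintype.card Y) : a ≤ (1 + 2 * ε) * mixUniform ε M x y := by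
  have hk : 0 ≤ ε / Fintype.card Y := by positivity
  have := hM x y
  simp only [mixUniform]
  nlinarith [mul_nonneg (mul_nonneg hε0 (by linarith : 0 ≤ 1 - 2 * ε)) this, mul_nonneg hε0 hk]

end MixUniform

lemma TotallyBounded.exists_fin_forall_dist_lt {S E : Type*} [PseudoMetricSpace E] {F : S → E}
    (hF : TotallyBounded (Set.range F)) {r : ℝ} (hr : 0 < r) :
    ∃ (J : ℕ) (σ : Fin J → S), ∀ s, ∃ j, dist (F s) (F (σ j)) < r := by
  obtain ⟨t, hts, htfin, hcover⟩ := Metric.finite_approx_of_totallyBounded hF r hr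
  choose g hg using fun m : t => hts m.2
  have := htfin.fintype
  refine ⟨Fintype.card t, g ∘ (Fintype.equivFin t).symm, fun s => ?_⟩
  obtain ⟨m, hm, hsm⟩ := Set.mem_iUnion₂.1 (hcover (Set.mem_range_self s))
  refine ⟨Fintype.equivFin t ⟨m, hm⟩, ?_⟩
  simpa [hg] using hsm

lemma mul_mul_log_div_mul_left {p b q : ℝ} (hp : 0 ≤ p) (hb : 0 ≤ b) (hq : p * b ≤ q) :
    p * b * Real.log (p * b / (p * q)) = p * (b * Real.log b) - p * b * Real.log q := by
  rcases hp.eq_or_lt with rfl | hp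
  · simp
  rcases hb.eq_or_lt with rfl | hb
  · simp
  have hq : 0 < q := (mul_pos hp hb).trans_le hq
  rw [mul_div_mul_left _ _ hp.ne', Real.log_div hb.ne' hq.ne']
  ring

section FiniteChannels

variable {X Y : Type*} [MeasurableSpace X] [MeasurableSpace Y]

lemma compProd_singleton [MeasurableSingletonClass X] [MeasurableSingletonClass Y]
    (P : Measure X) [SFinite P] (κ : Kernel X Y) [IsSFiniteKernel κ] (x : X) (y : Y) :
    (P ⊗ₘ κ) {(x, y)} = P {x} * κ x {y} := by
  rw [← Set.singleton_prod_singleton, Measure.compProd_apply_prod (measurableSet_singleton x)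
    (measurableSet_singleton y), Measure.restrict_singleton, lintegral_smul_measure,
    lintegral_dirac, smul_eq_mul]

instance (P : Measure X) [IsProbabilityMeasure P] (κ : Kernel X Y) [IsMarkovKernel κ] :
    IsProbabilityMeasure (outputM P κ) :=
  inferInstanceAs (IsProbabilityMeasure (κ ∘ₘ P))

def kernelMatrix (κ : Kernel X Y) : X → Y → ℝ := fun x y => (κ x).real {y}

lemma kernelMatrix_mem [Fintype Y] [MeasurableSingletonClass Y] (κ : Kernel X Y)
    [IsMarkovKernel κ] : kernelMatrix κ ∈ stochasticMatrices X Y :=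
  ⟨fun _ _ => measureReal_nonneg, fun x => by
    simp only [kernelMatrix, sum_measureReal_singleton, Finset.coe_univ, probReal_univ]⟩

variable [MeasurableSingletonClass X] [MeasurableSingletonClass Y] [Fintype X]

def matrixKernel (M : X → Y → ℝ) : Kernel X Y where
  toFun x := Measure.sum fun y => ENNReal.ofReal (M x y) • Measure.dirac y
  measurable' := measurable_of_countable _

lemma matrixKernel_singleton (M : X → Y → ℝ) (x : X) (y : Y) :
    matrixKernel M x {y} = ENNReal.ofReal (M x y) :=
  Measure.sum_smul_dirac_singleton

lemma kernelMatrix_matrixKernel {M : X → Y → ℝ} (hM : ∀ x y, 0 ≤ M x y) :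
    kernelMatrix (matrixKernel M) = M := by
  ext x y
  rw [kernelMatrix, measureReal_def, matrixKernel_singleton, ENNReal.toReal_ofReal (hM x y)]

lemma outputM_singleton (P : Measure X) (κ : Kernel X Y) (y : Y) :
    outputM P κ {y} = ∑ x, P {x} * κ x {y} := by
  rw [outputM, Measure.bind_apply (measurableSet_singleton _) (Kernel.measurable κ).aemeasurable,
    lintegral_fintype]
  simp only [mul_comm]

variable [Fintype Y]

lemma isMarkovKernel_matrixKernel {M : X → Y → ℝ} (hM : M ∈ stochasticMatrices X Y) :
    IsMarkovKernel (matrixKernel M) where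
  isProbabilityMeasure x := ⟨by
    rw [← Finset.coe_univ, ← sum_measure_singleton]
    simp only [matrixKernel_singleton]
    rw [← ENNReal.ofReal_sum_of_nonneg fun y _ => hM.1 x y, hM.2 x, ENNReal.ofReal_one]⟩

lemma mutInfo_eq_ofReal_mutualInfoOfMatrix (P : Measure X) [IsProbabilityMeasure P]
    (κ : Kernel X Y) [IsMarkovKernel κ] :
    mutInfo P κ = ENNReal.ofReal (mutualInfoOfMatrix (fun x => P.real {x}) (kernelMatrix κ)) := by
  set q : Y → ℝ := fun y => ∑ x, P.real {x} * kernelMatrix κ x y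
  have hQ : ∀ y, (outputM P κ).real {y} = q y := fun y => by
    simp only [measureReal_def, outputM_singleton, ENNReal.toReal_sum (fun x _ => ENNReal.mul_ne_top
      (measure_ne_top P _) (measure_ne_top _ _)), ENNReal.toReal_mul, q, kernelMatrix]
  have hjoint : ∀ x y, (P ⊗ₘ κ).real {(x, y)} = P.real {x} * kernelMatrix κ x y := fun x y => by
    simp only [measureReal_def, compProd_singleton, ENNReal.toReal_mul, kernelMatrix]
  have hprod : ∀ x y, (P.prod (outputM P κ)).real {(x, y)} = P.real {x} * q y := fun x y => by
    rw [← Set.singleton_prod_singleton, measureReal_prod_prod, hQ]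
  have hμν : P ⊗ₘ κ ≪ P.prod (outputM P κ) := absolutelyContinuous_of_forall_singleton
    fun ⟨x, y⟩ h => by
      rw [← Set.singleton_prod_singleton, Measure.prod_prod, mul_eq_zero, outputM_singleton,
        Finset.sum_eq_zero_iff] at h
      rw [compProd_singleton]
      rcases h with h | h
      · rw [h, zero_mul]
      · exact h x (Finset.mem_univ x)
  have hle : ∀ x y, P.real {x} * kernelMatrix κ x y ≤ q y := fun x y =>
    Finset.single_le_sum (f := fun x => P.real {x} * kernelMatrix κ x y)
      (fun _ _ => mul_nonneg measureReal_nonneg measureReal_nonneg) (Finset.mem_univ x)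
  rw [mutInfo, KLdiv_eq_sum _ _ hμν, Fintype.sum_prod_type]
  congr 1
  simp only [hjoint, hprod]
  rw [Finset.sum_congr rfl fun x _ => Finset.sum_congr rfl fun y _ => mul_mul_log_div_mul_left
    (b := kernelMatrix κ x y) measureReal_nonneg measureReal_nonneg (hle x y)]
  simp only [Finset.sum_sub_distrib]
  rw [Finset.sum_comm (f := fun x y => P.real {x} * kernelMatrix κ x y * Real.log (q y))]
  simp only [← Finset.sum_mul, ← Finset.mul_sum, mutualInfoOfMatrix, Real.negMulLog, neg_mul,
    Finset.sum_neg_distrib, mul_neg]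
  ring

lemma mutInfo_tsub_le_of_dist_lt (P : Measure X) [IsProbabilityMeasure P]
    (κ η : Kernel X Y) [IsMarkovKernel κ] [IsMarkovKernel η] {δ : ℝ}
    (h : dist (mutualInfoOfMatrix (fun x => P.real {x}) (kernelMatrix κ))
      (mutualInfoOfMatrix (fun x => P.real {x}) (kernelMatrix η)) < δ) :
    mutInfo P κ - mutInfo P η ≤ ENNReal.ofReal δ := by
  rw [mutInfo_eq_ofReal_mutualInfoOfMatrix, mutInfo_eq_ofReal_mutualInfoOfMatrix,
    tsub_le_iff_right]
  rw [Real.dist_eq, abs_lt] at h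
  exact (ENNReal.ofReal_le_ofReal (by linarith)).trans ENNReal.ofReal_add_le

variable [Nonempty Y] {M : X → Y → ℝ} {ε : ℝ}

lemma lintegral_KLdiv_matrixKernel_mixUniform_le (P : Measure X) [IsProbabilityMeasure P]
    (κ : Kernel X Y) [IsMarkovKernel κ] (hM : M ∈ stochasticMatrices X Y) (hε0 : 0 ≤ ε)
    (hε : ε ≤ 1 / 2) (hκM : dist (kernelMatrix κ) M < ε / Fintype.card Y) :
    ∫⁻ x, KLdiv (κ x) (matrixKernel (mixUniform ε M) x) ∂P ≤ ENNReal.ofReal (2 * ε) := by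
  have hmix := mixUniform_mem hM hε0 (by linarith)
  have := isMarkovKernel_matrixKernel hmix
  calc ∫⁻ x, KLdiv (κ x) (matrixKernel (mixUniform ε M) x) ∂P
      ≤ ∫⁻ _, ENNReal.ofReal (Real.log (1 + 2 * ε)) ∂P :=
        lintegral_mono fun x => KLdiv_le_log_of_le_mul _ _ fun y => by
          change kernelMatrix κ x y
            ≤ (1 + 2 * ε) * kernelMatrix (matrixKernel (mixUniform ε M)) x y
          rw [kernelMatrix_matrixKernel hmix.1]
          exact le_mul_mixUniform hM.1 hε0 hε (lt_add_of_dist_lt hκM x y).le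
    _ = ENNReal.ofReal (Real.log (1 + 2 * ε)) := by rw [lintegral_const, measure_univ, mul_one]
    _ ≤ ENNReal.ofReal (2 * ε) := ENNReal.ofReal_le_ofReal <| by
        linarith [Real.log_le_sub_one_of_pos (by linarith : 0 < 1 + 2 * ε)]

lemma RenyiDiv_matrixKernel_mixUniform_lt_top (μ : Measure Y) [IsFiniteMeasure μ]
    (hM : M ∈ stochasticMatrices X Y) (hε0 : 0 < ε) (hε1 : ε ≤ 1) {α : ℝ} (hα : 1 < α) (x : X) :
    RenyiDiv α μ (matrixKernel (mixUniform ε M) x) < ∞ := by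
  have := isMarkovKernel_matrixKernel (mixUniform_mem hM hε0.le hε1)
  refine RenyiDiv_lt_top_of_forall_ne_zero _ _ hα fun y => ?_
  rw [matrixKernel_singleton]
  exact (ENNReal.ofReal_pos.2 (mixUniform_pos hM.1 hε0 hε1 x y)).ne'

end FiniteChannels

theorem finite_alphabet_approximation_general
    {X Y S : Type*} [Fintype X] [Fintype Y] [Nonempty Y]
    [MeasurableSpace X] [DiscreteMeasurableSpace X]
    [MeasurableSpace Y] [DiscreteMeasurableSpace Y]
    (W : S → Kernel X Y) (hW : ∀ s, IsMarkovKernel (W s))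
    (P : Measure X) [IsProbabilityMeasure P] :
    ∀ δ : ℝ, 0 < δ → ∃ J : ℕ, CanApprox P W δ J := by
  intro δ hδ
  obtain ⟨η, hη, hI⟩ := Metric.uniformContinuousOn_iff.1
    (uniformContinuousOn_mutualInfoOfMatrix (Y := Y) fun x => P.real {x}) δ hδ
  obtain ⟨ε, hε0, hεδ, hε1, hεη⟩ : ∃ ε : ℝ, 0 < ε ∧ ε ≤ δ / 2 ∧ ε ≤ 1 / 2 ∧ ε ≤ η / 2 :=
    ⟨min (δ / 2) (min (1 / 2) (η / 2)), by positivity, min_le_left _ _,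
      (min_le_right _ _).trans (min_le_left _ _), (min_le_right _ _).trans (min_le_right _ _)⟩
  obtain ⟨J, σ, hσ⟩ := (isCompact_stochasticMatrices.totallyBounded.subset
    (Set.range_subset_iff.2 fun s => kernelMatrix_mem (W s))).exists_fin_forall_dist_lt
    (lt_min (by positivity : 0 < ε / Fintype.card Y) (half_pos hη))
  set M := fun j => mixUniform ε (kernelMatrix (W (σ j)))
  have hM j : M j ∈ stochasticMatrices X Y :=
    mixUniform_mem (kernelMatrix_mem _) hε0.le (by linarith)
  have hV j := isMarkovKernel_matrixKernel (hM j)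
  have hI' s j (h : dist (kernelMatrix (W s)) (kernelMatrix (W (σ j))) < η / 2) :
      dist (mutualInfoOfMatrix (fun x => P.real {x}) (kernelMatrix (matrixKernel (M j))))
        (mutualInfoOfMatrix (fun x => P.real {x}) (kernelMatrix (W s))) < δ := by
    rw [kernelMatrix_matrixKernel (hM j).1]
    refine hI _ (hM j) _ (kernelMatrix_mem _)
      ((dist_triangle_right _ _ (kernelMatrix (W (σ j)))).trans_lt ?_)
    linarith [dist_mixUniform_le (kernelMatrix_mem (W (σ j))) hε0.le]
  refine ⟨J, fun j => matrixKernel (M j), hV, fun s => ?_, fun j => ⟨σ j, ?_⟩⟩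
  · obtain ⟨j, hj⟩ := hσ s
    refine ⟨j, ?_, ⟨2, one_lt_two, fun x => RenyiDiv_matrixKernel_mixUniform_lt_top (W s x)
      (kernelMatrix_mem _) hε0 (by linarith) one_lt_two x⟩,
      mutInfo_tsub_le_of_dist_lt P _ _ (hI' s j (hj.trans_le (min_le_right _ _)))⟩
    exact (lintegral_KLdiv_matrixKernel_mixUniform_le P (W s) (kernelMatrix_mem _) hε0.le hε1
      (hj.trans_le (min_le_left _ _))).trans (ENNReal.ofReal_le_ofReal (by linarith))
  · refine mutInfo_tsub_le_of_dist_lt P _ _ ?_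
    rw [dist_comm]
    exact hI' (σ j) j (by simpa using half_pos hη)

theorem finite_alphabet_approximation
    {X Y S : Type*} [Fintype X] [Nonempty X] [Fintype Y] [Nonempty Y]
    [MeasurableSpace X] [DiscreteMeasurableSpace X]
    [MeasurableSpace Y] [DiscreteMeasurableSpace Y]
    (W : S → Kernel X Y) (hW : ∀ s, IsMarkovKernel (W s))
    (P : Measure X) [IsProbabilityMeasure P] :
    ∀ δ : ℝ, 0 < δ → ∃ J : ℕ, CanApprox P W δ J :=
  finite_alphabet_approximation_general W hW P
end
end

section
/- Let μ and ν be probability measures on a measurable space Y with μ ≪ ν, let α > 1 with D_α(μ‖ν) < ∞, and let β ∈ ℝ and n ∈ ℕ. Then μ^{⊗n}( { y ∈ Y^n : Σ_{k=1}^n log (dμ/dν)(y_k) ≥ nβ } ) ≤ exp( −(α−1)·n·(β − D_α(μ‖ν)) ). -/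
open MeasureTheory ProbabilityTheory ENNReal Filter

noncomputable section
open scoped Classical

private lemma lintegral_pi_prod_pow' {Y : Type*} [MeasurableSpace Y] (μ : Measure Y)
    [SigmaFinite μ] {g : Y → ℝ≥0∞} (hg : Measurable g) (n : ℕ) :
    ∫⁻ y : Fin n → Y, ∏ k, g (y k) ∂(Measure.pi fun _ : Fin n => μ)
      = (∫⁻ y, g y ∂μ) ^ n := by
  induction n with
  | zero => simp
  | succ n ih =>
    have hmp := (measurePreserving_piFinSuccAbove (fun _ : Fin (n+1) => μ) 0).symm
    have hf : Measurable fun y : Fin (n+1) → Y => ∏ k, g (y k) :=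
      Finset.measurable_prod _ fun k _ => hg.comp (measurable_pi_apply k)
    rw [← hmp.map_eq, lintegral_map hf hmp.measurable]
    simp only [MeasurableEquiv.piFinSuccAbove_symm_apply, Fin.insertNthEquiv,
      Fin.prod_univ_succ, Fin.insertNth_zero, Equiv.coe_fn_mk, Fin.cons_succ,
      Fin.zero_succAbove, Fin.cons_zero, cast_eq]
    rw [lintegral_prod_mul (f := g) (g := fun y : Fin n → Y => ∏ k, g (y k)) hg.aemeasurable
      (Finset.measurable_prod _ fun k _ => hg.comp (measurable_pi_apply k)).aemeasurable, ih,
      pow_succ, mul_comm]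


private lemma renyi_chernoff_aux
    {Y : Type*} [MeasurableSpace Y]
    (μ ν : Measure Y) [IsProbabilityMeasure μ] [IsProbabilityMeasure ν] (hac : μ ≪ ν)
    (α : ℝ) (hα : 1 < α)
    (hfin : (if (1 < α ∧ ∫⁻ y, μ.rnDeriv ν y ^ α ∂ν = ∞) ∨ (α < 1 ∧ ∫⁻ y, μ.rnDeriv ν y ^ α ∂ν = 0) then (∞ : ℝ≥0∞)
  else ENNReal.ofReal ((α - 1)⁻¹ * Real.log (∫⁻ y, μ.rnDeriv ν y ^ α ∂ν).toReal)) < ∞) (β : ℝ) (n : ℕ) (D : ℝ)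
    (hD : (α - 1)⁻¹ * Real.log (∫⁻ y, μ.rnDeriv ν y ^ α ∂ν).toReal ≤ D) :
    (Measure.pi fun _ : Fin n => μ)
        {y | (n : ℝ) * β ≤ ∑ k, Real.log (μ.rnDeriv ν (y k)).toReal}
      ≤ ENNReal.ofReal
          (Real.exp (-((α - 1) * n * (β - D)))) := by
  set r : Y → ℝ≥0∞ := μ.rnDeriv ν with hrdef
  have hrm : Measurable r := Measure.measurable_rnDeriv μ ν
  have ht : (0:ℝ) < α - 1 := by linarith
  set I : ℝ≥0∞ := ∫⁻ y, r y ^ α ∂ν with hIdef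
  have hItop : I ≠ ∞ := by
    intro h
    rw [if_pos (Or.inl ⟨hα, h⟩)] at hfin
    exact lt_irrefl _ hfin
  have hI0 : I ≠ 0 := by
    intro h
    have h1 : ∀ᵐ y ∂ν, r y ^ α = 0 :=
      (lintegral_eq_zero_iff (hrm.pow_const α)).mp h
    have h2 : ∀ᵐ y ∂ν, r y = 0 := by
      filter_upwards [h1] with y hy
      rcases ENNReal.rpow_eq_zero_iff.mp hy with ⟨h,_⟩|⟨_,h⟩
      · exact h
      · linarith
    have h3 : μ Set.univ = 0 := by
      rw [← Measure.lintegral_rnDeriv hac, lintegral_congr_ae h2, lintegral_zero]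
    simp [measure_univ] at h3
  have hIt : (0:ℝ) < I.toReal := ENNReal.toReal_pos hI0 hItop
  -- bound I by exp((α-1) * D)
  have hIle : I ≤ ENNReal.ofReal (Real.exp ((α - 1) * D)) := by
    rw [← ENNReal.ofReal_toReal hItop]
    apply ENNReal.ofReal_le_ofReal
    rw [← Real.exp_log hIt]
    apply Real.exp_le_exp.mpr
    have : Real.log I.toReal = (α - 1) * ((α - 1)⁻¹ * Real.log I.toReal) := by
      field_simp
    rw [this]
    exact mul_le_mul_of_nonneg_left hD ht.le
  -- the single-letter function
  set g : Y → ℝ≥0∞ := fun y => ENNReal.ofReal (Real.exp ((α - 1) * Real.log (r y).toReal))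
    with hgdef
  have hgm : Measurable g :=
    ((measurable_const.mul (Real.measurable_log.comp hrm.ennreal_toReal)).exp).ennreal_ofReal
  have hg_int : ∫⁻ y, g y ∂μ = I := by
    have hge : g =ᵐ[μ] fun y => r y ^ (α - 1) := by
      filter_upwards [Measure.rnDeriv_pos hac, hac.ae_le (Measure.rnDeriv_ne_top μ ν)]
        with y hy1 hy2
      have hpos : 0 < (r y).toReal := ENNReal.toReal_pos hy1.ne' hy2
      simp only [hgdef]
      rw [mul_comm, ← Real.rpow_def_of_pos hpos, ← ENNReal.ofReal_rpow_of_pos hpos,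
        ENNReal.ofReal_toReal hy2]
    rw [lintegral_congr_ae hge]
    nth_rewrite 1 [← Measure.withDensity_rnDeriv_eq μ ν hac]
    rw [lintegral_withDensity_eq_lintegral_mul _ hrm (hrm.pow_const _)]
    apply lintegral_congr fun y => ?_
    simp only [Pi.mul_apply]
    nth_rewrite 1 [← ENNReal.rpow_one (r y)]
    rw [← ENNReal.rpow_add_of_nonneg _ _ zero_le_one ht.le]
    norm_num
  -- Chernoff
  set ε := ENNReal.ofReal (Real.exp ((α - 1) * ((n : ℝ) * β))) with hεdef
  have hε0 : ε ≠ 0 := by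
    exact (ENNReal.ofReal_pos.mpr (Real.exp_pos _)).ne'
  have hεtop : ε ≠ ∞ := ENNReal.ofReal_ne_top
  have hsub : {y : Fin n → Y | (n : ℝ) * β ≤ ∑ k, Real.log (r (y k)).toReal}
      ⊆ {y : Fin n → Y | ε ≤ ∏ k, g (y k)} := by
    intro y hy
    have hprod : ∏ k, g (y k)
        = ENNReal.ofReal (Real.exp ((α - 1) * ∑ k, Real.log (r (y k)).toReal)) := by
      rw [Finset.mul_sum, Real.exp_sum, ENNReal.ofReal_prod_of_nonneg
        fun k _ => (Real.exp_pos _).le]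
    rw [Set.mem_setOf_eq, hprod]
    exact ENNReal.ofReal_le_ofReal (Real.exp_le_exp.mpr
      (mul_le_mul_of_nonneg_left hy ht.le))
  have hmarkov := mul_meas_ge_le_lintegral₀
    (μ := Measure.pi fun _ : Fin n => μ) (f := fun y : Fin n → Y => ∏ k, g (y k))
    (Finset.measurable_prod Finset.univ
      (fun k _ => hgm.comp (measurable_pi_apply k))).aemeasurable ε
  rw [lintegral_pi_prod_pow' μ hgm n, hg_int] at hmarkov
  have key : (Measure.pi fun _ : Fin n => μ)
      {y | (n : ℝ) * β ≤ ∑ k, Real.log (r (y k)).toReal} ≤ ε⁻¹ * I ^ n := by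
    set P := Measure.pi fun _ : Fin n => μ with hP
    have h4 : P {y | (n : ℝ) * β ≤ ∑ k, Real.log (r (y k)).toReal}
        ≤ P {y | ε ≤ ∏ k, g (y k)} := measure_mono hsub
    have h5 : P {y | ε ≤ ∏ k, g (y k)}
        = ε⁻¹ * (ε * P {y | ε ≤ ∏ k, g (y k)}) := by
      rw [← mul_assoc, ENNReal.inv_mul_cancel hε0 hεtop, one_mul]
    exact h4.trans (h5.le.trans (mul_le_mul_right hmarkov _))
  refine key.trans ?_
  have h1 : ε⁻¹ = ENNReal.ofReal (Real.exp (-((α - 1) * ((n : ℝ) * β)))) := by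
    rw [hεdef, ← ENNReal.ofReal_inv_of_pos (Real.exp_pos _), ← Real.exp_neg]
  have h2 : I ^ n ≤ ENNReal.ofReal (Real.exp ((n : ℝ) * ((α - 1) * D))) := by
    calc I ^ n ≤ (ENNReal.ofReal (Real.exp ((α - 1) * D))) ^ n := pow_le_pow_left' hIle n
      _ = ENNReal.ofReal (Real.exp ((α - 1) * D) ^ n) :=
          (ENNReal.ofReal_pow (Real.exp_pos _).le n).symm
      _ = ENNReal.ofReal (Real.exp ((n : ℝ) * ((α - 1) * D))) := by
          rw [Real.exp_nat_mul]
  rw [h1]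
  calc ENNReal.ofReal (Real.exp (-((α - 1) * ((n : ℝ) * β)))) * I ^ n
      ≤ ENNReal.ofReal (Real.exp (-((α - 1) * ((n : ℝ) * β)))) *
        ENNReal.ofReal (Real.exp ((n : ℝ) * ((α - 1) * D))) := mul_le_mul_right h2 _
    _ = ENNReal.ofReal (Real.exp (-((α - 1) * ((n : ℝ) * β))) *
        Real.exp ((n : ℝ) * ((α - 1) * D))) :=
          (ENNReal.ofReal_mul (Real.exp_pos _).le).symm
    _ = ENNReal.ofReal (Real.exp (-((α - 1) * n * (β - D)))) := by
          rw [← Real.exp_add]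
          ring_nf


theorem renyi_chernoff_bound_upper
    {Y : Type*} [MeasurableSpace Y]
    (μ ν : Measure Y) [IsProbabilityMeasure μ] [IsProbabilityMeasure ν] (hac : μ ≪ ν)
    (α : ℝ) (hα : 1 < α) (hfin : RenyiDiv α μ ν < ∞) (β : ℝ) (n : ℕ) :
    (Measure.pi fun _ : Fin n => μ)
        {y | (n : ℝ) * β ≤ ∑ k, Real.log (μ.rnDeriv ν (y k)).toReal}
      ≤ ENNReal.ofReal
          (Real.exp (-((α - 1) * n * (β - (RenyiDiv α μ ν).toReal)))) := by
  rw [RenyiDiv] at hfin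
  have hItop : ∫⁻ y, μ.rnDeriv ν y ^ α ∂ν ≠ ∞ := by
    intro h
    rw [if_pos (Or.inl ⟨hα, h⟩)] at hfin
    exact lt_irrefl _ hfin
  have hcond : ¬((1 < α ∧ ∫⁻ y, μ.rnDeriv ν y ^ α ∂ν = ∞)
      ∨ (α < 1 ∧ ∫⁻ y, μ.rnDeriv ν y ^ α ∂ν = 0)) := by
    rintro (⟨_, h⟩ | ⟨h, _⟩)
    · exact hItop h
    · linarith
  have hR : RenyiDiv α μ ν
      = ENNReal.ofReal ((α - 1)⁻¹ * Real.log (∫⁻ y, μ.rnDeriv ν y ^ α ∂ν).toReal) := by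
    rw [RenyiDiv, if_neg hcond]
  have hD : (α - 1)⁻¹ * Real.log (∫⁻ y, μ.rnDeriv ν y ^ α ∂ν).toReal
      ≤ (RenyiDiv α μ ν).toReal := by
    rw [hR, ENNReal.toReal_ofReal']
    exact le_max_left _ _
  exact renyi_chernoff_aux μ ν hac α hα hfin β n _ hD
end
end

section
/- Let μ and ν be probability measures on a measurable space Y with μ ≪ ν, let α ∈ (0,1), and let β ∈ ℝ and n ∈ ℕ. Then μ^{⊗n}( { y ∈ Y^n : Σ_{k=1}^n log (dμ/dν)(y_k) ≤ nβ } ) ≤ exp( −(1−α)·n·(D_α(μ‖ν) − β) ). -/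
open MeasureTheory ProbabilityTheory ENNReal Filter

noncomputable section
open scoped Classical

/-! Chernoff's argument with the nonpositive exponent `α - 1`: on the event
`∑ log f(y_k) ≤ nβ`, where `f = dμ/dν`, the indicator is dominated by
`exp((α - 1)(∑ log f(y_k) - nβ)) = e^{(1-α)nβ} ∏ f(y_k)^{α-1}`. Under `μ^{⊗n}` the factors are
independent, each with mean `∫ f^{α-1} dμ = ∫ f^α dν = exp(-(1-α) D_α(μ‖ν))`; Hölder gives
`∫ f^α dν ≤ 1`, which is what makes `D_α` nonnegative. -/

section

variable {Y : Type*} [MeasurableSpace Y]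

lemma measure_le_le_lintegral_exp_mul {P : Measure Y} {S : Y → ℝ} (hS : AEMeasurable S P)
    {t : ℝ} (ht : t ≤ 0) (c : ℝ) :
    P {y | S y ≤ c} ≤ ∫⁻ y, ENNReal.ofReal (Real.exp (t * (S y - c))) ∂P := by
  calc P {y | S y ≤ c} ≤ P {y | 1 ≤ ENNReal.ofReal (Real.exp (t * (S y - c)))} :=
        measure_mono fun y hy => ENNReal.one_le_ofReal.2 <|
          Real.one_le_exp (mul_nonneg_of_nonpos_of_nonpos ht (sub_nonpos.2 hy))
    _ ≤ ∫⁻ y, ENNReal.ofReal (Real.exp (t * (S y - c))) ∂P := by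
        simpa using mul_meas_ge_le_lintegral₀
          (f := fun y => ENNReal.ofReal (Real.exp (t * (S y - c)))) (by fun_prop) 1

lemma lintegral_pi_prod_eq_pow {ι : Type*} [Fintype ι] (μ : Measure Y) [IsProbabilityMeasure μ]
    {g : Y → ℝ≥0∞} (hg : Measurable g) :
    ∫⁻ y, ∏ i, g (y i) ∂Measure.pi (fun _ : ι => μ) = (∫⁻ y, g y ∂μ) ^ Fintype.card ι := by
  rw [lintegral_prod_eq_prod_lintegral_of_indepFun _ _ (iIndepFun_pi fun _ => hg.aemeasurable)
    fun i => hg.comp (measurable_pi_apply i)]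
  simp_rw [(measurePreserving_eval (fun _ : ι => μ) _).lintegral_comp hg]
  simp

lemma ENNReal.ofReal_exp_mul_log_toReal {x : ℝ≥0∞} (h0 : x ≠ 0) (htop : x ≠ ∞) (t : ℝ) :
    ENNReal.ofReal (Real.exp (t * Real.log x.toReal)) = x ^ t := by
  have hx : 0 < x.toReal := ENNReal.toReal_pos h0 htop
  rw [mul_comm, ← Real.rpow_def_of_pos hx, ← ENNReal.ofReal_rpow_of_pos hx,
    ENNReal.ofReal_toReal htop]

lemma ENNReal.mul_rpow_sub_one {x : ℝ≥0∞} (hx : x ≠ ∞) {α : ℝ} (hα : 0 < α) :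
    x * x ^ (α - 1) = x ^ α := by
  rcases eq_or_ne x 0 with rfl | h0
  · simp [ENNReal.zero_rpow_of_pos hα]
  · conv_rhs => rw [← add_sub_cancel 1 α, ENNReal.rpow_add _ _ h0 hx, ENNReal.rpow_one]

variable (μ ν : Measure Y)

lemma lintegral_rnDeriv_rpow_le_one [IsProbabilityMeasure μ] [IsProbabilityMeasure ν]
    {α : ℝ} (hα0 : 0 ≤ α) (hα1 : α ≤ 1) :
    ∫⁻ y, μ.rnDeriv ν y ^ α ∂ν ≤ 1 := by
  calc ∫⁻ y, μ.rnDeriv ν y ^ α ∂ν = ∫⁻ y, μ.rnDeriv ν y ^ α * 1 ^ (1 - α) ∂ν := by simp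
    _ ≤ (∫⁻ y, μ.rnDeriv ν y ∂ν) ^ α * (∫⁻ _, 1 ∂ν) ^ (1 - α) :=
      ENNReal.lintegral_mul_norm_pow_le (Measure.measurable_rnDeriv μ ν).aemeasurable
        aemeasurable_const hα0 (by linarith) (by ring)
    _ ≤ 1 := by
      simpa using ENNReal.rpow_le_one (Measure.lintegral_rnDeriv_le.trans_eq measure_univ) hα0

lemma lintegral_rnDeriv_rpow_ne_zero [μ.HaveLebesgueDecomposition ν] [NeZero μ] (hac : μ ≪ ν)
    {α : ℝ} (hα0 : 0 < α) :
    ∫⁻ y, μ.rnDeriv ν y ^ α ∂ν ≠ 0 := by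
  intro h
  have hf : μ.rnDeriv ν =ᵐ[ν] 0 := ENNReal.ae_eq_zero_of_lintegral_rpow_eq_zero hα0.le
    (Measure.measurable_rnDeriv μ ν).aemeasurable h
  apply NeZero.ne μ
  rw [← Measure.measure_univ_eq_zero, ← Measure.lintegral_rnDeriv hac, lintegral_congr_ae hf]
  simp

lemma lintegral_exp_mul_log_rnDeriv [SigmaFinite μ] [μ.HaveLebesgueDecomposition ν] (hac : μ ≪ ν)
    {α : ℝ} (hα0 : 0 < α) :
    ∫⁻ y, ENNReal.ofReal (Real.exp ((α - 1) * Real.log (μ.rnDeriv ν y).toReal)) ∂μ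
      = ∫⁻ y, μ.rnDeriv ν y ^ α ∂ν := by
  calc ∫⁻ y, ENNReal.ofReal (Real.exp ((α - 1) * Real.log (μ.rnDeriv ν y).toReal)) ∂μ
      = ∫⁻ y, μ.rnDeriv ν y ^ (α - 1) ∂μ := by
        refine lintegral_congr_ae ?_
        filter_upwards [Measure.rnDeriv_pos hac, hac.ae_le (Measure.rnDeriv_lt_top μ ν)]
          with y hpos hfin
        exact ENNReal.ofReal_exp_mul_log_toReal hpos.ne' hfin.ne _
    _ = ∫⁻ y, μ.rnDeriv ν y * μ.rnDeriv ν y ^ (α - 1) ∂ν :=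
        (lintegral_rnDeriv_mul hac (by fun_prop)).symm
    _ = ∫⁻ y, μ.rnDeriv ν y ^ α ∂ν := by
        refine lintegral_congr_ae ?_
        filter_upwards [Measure.rnDeriv_lt_top μ ν] with y hfin
        exact ENNReal.mul_rpow_sub_one hfin.ne hα0

lemma exp_neg_one_sub_mul_renyiDiv_toReal [IsProbabilityMeasure μ] [IsProbabilityMeasure ν]
    (hac : μ ≪ ν) {α : ℝ} (hα0 : 0 < α) (hα1 : α < 1) :
    Real.exp (-((1 - α) * (RenyiDiv α μ ν).toReal)) = (∫⁻ y, μ.rnDeriv ν y ^ α ∂ν).toReal := by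
  set Z := ∫⁻ y, μ.rnDeriv ν y ^ α ∂ν
  have hZ0 : Z ≠ 0 := lintegral_rnDeriv_rpow_ne_zero μ ν hac hα0
  have hZ1 : Z ≤ 1 := lintegral_rnDeriv_rpow_le_one μ ν hα0.le hα1.le
  have hZpos : 0 < Z.toReal := ENNReal.toReal_pos hZ0 (ne_top_of_le_ne_top one_ne_top hZ1)
  have hlog : Real.log Z.toReal ≤ 0 :=
    Real.log_nonpos hZpos.le (ENNReal.toReal_le_of_le_ofReal zero_le_one (by simpa using hZ1))
  have hsub : α - 1 ≠ 0 := by linarith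
  -- `Z ≤ 1` makes the divergence nonnegative, so the truncation by `ENNReal.ofReal` is harmless.
  rw [RenyiDiv, if_neg (by rintro (⟨h, -⟩ | ⟨-, h⟩) <;> [linarith; exact hZ0 h]),
    ENNReal.toReal_ofReal (mul_nonneg_of_nonpos_of_nonpos (by simp; linarith) hlog)]
  rw [show -((1 - α) * ((α - 1)⁻¹ * Real.log Z.toReal)) = Real.log Z.toReal by field_simp; ring,
    Real.exp_log hZpos]

end

theorem renyi_chernoff_bound_lower
    {Y : Type*} [MeasurableSpace Y]
    (μ ν : Measure Y) [IsProbabilityMeasure μ] [IsProbabilityMeasure ν] (hac : μ ≪ ν)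
    (α : ℝ) (hα0 : 0 < α) (hα1 : α < 1) (β : ℝ) (n : ℕ) :
    (Measure.pi fun _ : Fin n => μ)
        {y | ∑ k, Real.log (μ.rnDeriv ν (y k)).toReal ≤ (n : ℝ) * β}
      ≤ ENNReal.ofReal
          (Real.exp (-((1 - α) * n * ((RenyiDiv α μ ν).toReal - β)))) := by
  set Z := ∫⁻ y, μ.rnDeriv ν y ^ α ∂ν
  set L : Y → ℝ := fun y => Real.log (μ.rnDeriv ν y).toReal
  have hL : Measurable L := (Measure.measurable_rnDeriv μ ν).ennreal_toReal.log
  have hZ : Z ≠ ∞ :=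
    ne_top_of_le_ne_top one_ne_top (lintegral_rnDeriv_rpow_le_one μ ν hα0.le hα1.le)
  calc (Measure.pi fun _ : Fin n => μ) {y | ∑ k, L (y k) ≤ n * β}
      ≤ ∫⁻ y, ENNReal.ofReal (Real.exp ((α - 1) * (∑ k, L (y k) - n * β)))
          ∂Measure.pi fun _ : Fin n => μ :=
        measure_le_le_lintegral_exp_mul
          (Finset.measurable_sum _ fun k _ => hL.comp (measurable_pi_apply k)).aemeasurable
          (by linarith) _
    _ = ∫⁻ y, ENNReal.ofReal (Real.exp ((1 - α) * (n * β))) *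
          ∏ k, ENNReal.ofReal (Real.exp ((α - 1) * L (y k))) ∂Measure.pi fun _ : Fin n => μ := by
        refine lintegral_congr fun y => ?_
        rw [← ENNReal.ofReal_prod_of_nonneg fun _ _ => (Real.exp_pos _).le, ← Real.exp_sum,
          ← ENNReal.ofReal_mul (Real.exp_pos _).le, ← Real.exp_add, ← Finset.mul_sum]
        ring_nf
    _ = ENNReal.ofReal (Real.exp ((1 - α) * (n * β))) * Z ^ n := by
        have hg : Measurable fun y => ENNReal.ofReal (Real.exp ((α - 1) * L y)) := by fun_prop
        rw [lintegral_const_mul _ (by fun_prop), lintegral_pi_prod_eq_pow μ hg,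
          lintegral_exp_mul_log_rnDeriv μ ν hac hα0, Fintype.card_fin]
    _ = ENNReal.ofReal (Real.exp (-((1 - α) * n * ((RenyiDiv α μ ν).toReal - β)))) := by
        rw [show -((1 - α) * n * ((RenyiDiv α μ ν).toReal - β))
            = (1 - α) * (n * β) + n * -((1 - α) * (RenyiDiv α μ ν).toReal) by ring,
          Real.exp_add, Real.exp_nat_mul, exp_neg_one_sub_mul_renyiDiv_toReal μ ν hac hα0 hα1,
          ENNReal.ofReal_mul (Real.exp_pos _).le, ENNReal.ofReal_pow ENNReal.toReal_nonneg,
          ENNReal.ofReal_toReal hZ]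
end
end

section
/- Let μ and ν be probability measures on the same measurable space with μ ≪ ν, and suppose D_{α₀}(μ‖ν) < ∞ for some α₀ > 1. Then D(μ‖ν) < ∞, the map α ↦ D_α(μ‖ν) is nondecreasing on (1, α₀], and D_α(μ‖ν) → D(μ‖ν) as α → 1 from above, where D(·‖·) denotes Kullback–Leibler divergence. -/
open MeasureTheory ProbabilityTheory ENNReal Filter

noncomputable section
open scoped Classical

/-! With `X = log (dμ/dν)` under `μ`, `∫ (dμ/dν)^α dν = 𝔼_μ[exp ((α - 1) X)]`, so
`D_α(μ‖ν) = Λ(α - 1) / (α - 1)` for the cumulant generating function `Λ` of `X`. Since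
`exp (-X) = dν/dμ` is `μ`-integrable and `exp ((α₀ - 1) X)` is by hypothesis, `0` is interior to
the domain of `Λ`: hence `X` is integrable, i.e. `D(μ‖ν) < ∞`, and `Λ` is differentiable at `0`
with `Λ(0) = 0`, `Λ'(0) = 𝔼_μ[X] = D(μ‖ν)`, which gives the limit. Monotonicity of `Λ(s) / s`
is Jensen's inequality for the concave map `x ↦ x ^ (s / t)`, `0 < s ≤ t`. -/

open Set Topology

namespace ProbabilityTheory

variable {Ω : Type*} [MeasurableSpace Ω] {μ : Measure Ω} [IsProbabilityMeasure μ] {X : Ω → ℝ}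

lemma cgf_div_le_cgf_div {s t : ℝ} (ht : Integrable (fun ω ↦ Real.exp (t * X ω)) μ)
    (hs : 0 < s) (hst : s ≤ t) : cgf X μ s / s ≤ cgf X μ t / t := by
  have ht₀ : 0 < t := hs.trans_le hst
  have hp₀ : 0 ≤ s / t := div_nonneg hs.le ht₀.le
  have hs_int : Integrable (fun ω ↦ Real.exp (s * X ω)) μ :=
    integrable_exp_mul_of_nonneg_of_le ht hs.le hst
  have hpow : ∀ ω, Real.exp (t * X ω) ^ (s / t) = Real.exp (s * X ω) := fun ω ↦ by
    rw [← Real.exp_mul]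
    field_simp
  have hjensen : mgf X μ s ≤ mgf X μ t ^ (s / t) := by
    have := (Real.concaveOn_rpow hp₀ ((div_le_one ht₀).2 hst)).le_map_integral
      (Real.continuous_rpow_const hp₀).continuousOn isClosed_Ici
      (ae_of_all _ fun ω ↦ (Real.exp_pos (t * X ω)).le) ht
      (by simpa only [Function.comp_def, hpow] using hs_int)
    simpa only [mgf, hpow] using this
  have hlog : cgf X μ s ≤ s / t * cgf X μ t := by
    rw [cgf, cgf, ← Real.log_rpow (mgf_pos ht)]
    exact Real.log_le_log (mgf_pos hs_int) hjensen
  rw [div_le_div_iff₀ hs ht₀]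
  calc cgf X μ s * t ≤ s / t * cgf X μ t * t := mul_le_mul_of_nonneg_right hlog ht₀.le
    _ = cgf X μ t * s := by field_simp

lemma tendsto_cgf_div_nhdsGT_zero (h : 0 ∈ interior (integrableExpSet X μ)) :
    Tendsto (fun s ↦ cgf X μ s / s) (𝓝[>] 0) (𝓝 μ[X]) := by
  have hderiv : HasDerivAt (cgf X μ) μ[X] 0 := by
    simpa [deriv_cgf_zero h] using (analyticAt_cgf h).differentiableAt.hasDerivAt
  have hslope : slope (cgf X μ) 0 = fun s ↦ cgf X μ s / s := by
    ext s
    simp [slope_def_field]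
  exact hslope ▸ (hasDerivAt_iff_tendsto_slope.mp hderiv).mono_left (nhdsGT_le_nhdsNE 0)

end ProbabilityTheory

namespace MeasureTheory

variable {Y : Type*} [MeasurableSpace Y] {μ ν : Measure Y}

lemma lintegral_rnDeriv_rpow_eq_lintegral_exp_llr [SigmaFinite μ] [SigmaFinite ν] (hac : μ ≪ ν)
    {α : ℝ} (hα : 1 < α) :
    ∫⁻ y, μ.rnDeriv ν y ^ α ∂ν = ∫⁻ y, ENNReal.ofReal (Real.exp ((α - 1) * llr μ ν y)) ∂μ := by
  calc ∫⁻ y, μ.rnDeriv ν y ^ α ∂ν = ∫⁻ y, μ.rnDeriv ν y * μ.rnDeriv ν y ^ (α - 1) ∂ν := by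
        refine lintegral_congr_ae ?_
        filter_upwards [μ.rnDeriv_lt_top ν] with y hy
        have := ENNReal.rpow_add_of_add_pos hy.ne 1 (α - 1) (by linarith)
        rwa [add_sub_cancel, ENNReal.rpow_one] at this
    _ = ∫⁻ y, μ.rnDeriv ν y ^ (α - 1) ∂μ :=
        lintegral_rnDeriv_mul hac ((μ.measurable_rnDeriv ν).pow_const _).aemeasurable
    _ = ∫⁻ y, ENNReal.ofReal (Real.exp ((α - 1) * llr μ ν y)) ∂μ := by
        refine lintegral_congr_ae ?_
        filter_upwards [exp_llr_of_ac μ ν hac, hac.ae_le (μ.rnDeriv_lt_top ν)] with y hexp hlt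
        rw [mul_comm, Real.exp_mul, hexp, ← ENNReal.ofReal_rpow_of_nonneg ENNReal.toReal_nonneg
          (by linarith), ENNReal.ofReal_toReal hlt.ne]

lemma integrable_exp_mul_llr_iff [SigmaFinite μ] [SigmaFinite ν] (hac : μ ≪ ν) {α : ℝ}
    (hα : 1 < α) :
    Integrable (fun y ↦ Real.exp ((α - 1) * llr μ ν y)) μ ↔ ∫⁻ y, μ.rnDeriv ν y ^ α ∂ν ≠ ∞ := by
  rw [lintegral_rnDeriv_rpow_eq_lintegral_exp_llr hac hα, lintegral_ofReal_ne_top_iff_integrable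
    ((measurable_llr μ ν).const_mul _).exp.aestronglyMeasurable
    (ae_of_all _ fun _ ↦ (Real.exp_pos _).le)]

lemma toReal_lintegral_rnDeriv_rpow [SigmaFinite μ] [SigmaFinite ν] (hac : μ ≪ ν) {α : ℝ}
    (hα : 1 < α) : (∫⁻ y, μ.rnDeriv ν y ^ α ∂ν).toReal = mgf (llr μ ν) μ (α - 1) := by
  rw [lintegral_rnDeriv_rpow_eq_lintegral_exp_llr hac hα, mgf, integral_eq_lintegral_of_nonneg_ae
    (ae_of_all _ fun _ ↦ (Real.exp_pos _).le)
    ((measurable_llr μ ν).const_mul _).exp.aestronglyMeasurable]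

lemma neg_one_mem_integrableExpSet_llr [SigmaFinite μ] [IsFiniteMeasure ν] (hac : μ ≪ ν) :
    -1 ∈ integrableExpSet (llr μ ν) μ := by
  have := (Measure.integrable_toReal_rnDeriv (μ := ν) (ν := μ)).congr (exp_neg_llr hac).symm
  simpa [integrableExpSet] using this

end MeasureTheory

section Divergences

variable {Y : Type*} [MeasurableSpace Y] {μ ν : Measure Y}

lemma KLdiv_eq_ofReal_integral_llr (h : Integrable (llr μ ν) μ) :
    KLdiv μ ν = ENNReal.ofReal μ[llr μ ν] :=
  if_pos h

lemma lintegral_rnDeriv_rpow_ne_top_of_renyiDiv_lt_top {α : ℝ} (hα : 1 < α)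
    (h : RenyiDiv α μ ν < ∞) : ∫⁻ y, μ.rnDeriv ν y ^ α ∂ν ≠ ∞ := by
  intro htop
  rw [RenyiDiv, if_pos (Or.inl ⟨hα, htop⟩)] at h
  exact lt_irrefl _ h

lemma renyiDiv_eq_ofReal_cgf_llr_div [SigmaFinite μ] [SigmaFinite ν] (hac : μ ≪ ν) {α : ℝ}
    (hα : 1 < α) (hint : α - 1 ∈ integrableExpSet (llr μ ν) μ) :
    RenyiDiv α μ ν = ENNReal.ofReal (cgf (llr μ ν) μ (α - 1) / (α - 1)) := by
  have hfin := (integrable_exp_mul_llr_iff hac hα).1 hint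
  rw [RenyiDiv, if_neg (by rintro (⟨-, h⟩ | ⟨h, -⟩) <;> [exact hfin h; linarith]),
    toReal_lintegral_rnDeriv_rpow hac hα, cgf, div_eq_inv_mul]

end Divergences

theorem renyi_monotone_and_tendsto_kl_from_above
    {Y : Type*} [MeasurableSpace Y]
    (μ ν : Measure Y) [IsProbabilityMeasure μ] [IsProbabilityMeasure ν] (hac : μ ≪ ν)
    (α₀ : ℝ) (hα₀ : 1 < α₀) (hfin : RenyiDiv α₀ μ ν < ∞) :
    KLdiv μ ν < ∞ ∧
    (∀ a b : ℝ, 1 < a → a ≤ b → b ≤ α₀ → RenyiDiv a μ ν ≤ RenyiDiv b μ ν) ∧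
    Filter.Tendsto (fun α : ℝ => RenyiDiv α μ ν)
      (nhdsWithin 1 (Set.Ioi 1)) (nhds (KLdiv μ ν)) := by
  have hIcc : Icc (-1) (α₀ - 1) ⊆ integrableExpSet (llr μ ν) μ :=
    convex_integrableExpSet.ordConnected.out (neg_one_mem_integrableExpSet_llr hac)
      ((integrable_exp_mul_llr_iff hac hα₀).2
        (lintegral_rnDeriv_rpow_ne_top_of_renyiDiv_lt_top hα₀ hfin))
  have h0 : 0 ∈ interior (integrableExpSet (llr μ ν) μ) :=
    interior_mono hIcc (by rw [interior_Icc]; constructor <;> linarith)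
  have hRD : ∀ α ∈ Ioc 1 α₀,
      RenyiDiv α μ ν = ENNReal.ofReal (cgf (llr μ ν) μ (α - 1) / (α - 1)) := fun α hα ↦
    renyiDiv_eq_ofReal_cgf_llr_div hac hα.1 (hIcc ⟨by linarith [hα.1], by linarith [hα.2]⟩)
  rw [KLdiv_eq_ofReal_integral_llr (integrable_of_mem_interior_integrableExpSet h0)]
  refine ⟨ofReal_lt_top, fun a b ha hab hb ↦ ?_, ?_⟩
  · rw [hRD a ⟨ha, hab.trans hb⟩, hRD b ⟨ha.trans_le hab, hb⟩]
    exact ENNReal.ofReal_le_ofReal (cgf_div_le_cgf_div (hIcc ⟨by linarith, by linarith⟩)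
      (sub_pos.2 ha) (by linarith))
  · have hshift : Tendsto (fun α : ℝ ↦ α - 1) (𝓝[>] 1) (𝓝[>] 0) :=
      tendsto_nhdsWithin_of_tendsto_nhds_of_eventually_within _
        (by simpa using (continuous_sub_right (1 : ℝ)).tendsto 1 |>.mono_left nhdsWithin_le_nhds)
        (eventually_nhdsWithin_of_forall fun _ hα ↦ sub_pos.2 (mem_Ioi.1 hα))
    refine ((ENNReal.tendsto_ofReal (tendsto_cgf_div_nhdsGT_zero h0)).comp hshift).congr' ?_
    filter_upwards [Ioc_mem_nhdsGT hα₀] with α hα using (hRD α hα).symm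
end
end

section
/- Let P be a probability measure on a measurable space X and ν a σ-finite measure on a measurable space Y. For each n ∈ ℕ and for n = ∞, let w_n : X × Y → [0,∞) be jointly measurable with ∫ w_n(x,y) ν(dy) = 1 for every x ∈ X, and suppose there is a constant B < ∞ with w_n(x,y) ≤ B for all n, x, y, and that w_n(x,y) → w_∞(x,y) as n → ∞ for every (x,y). Define the marginal densities q_n(y) := ∫ w_n(x,y) P(dx). Then liminf_{n→∞} ∫∫ w_n(x,y) · log( w_n(x,y)/q_n(y) ) ν(dy) P(dx) ≥ ∫∫ w_∞(x,y) · log( w_∞(x,y)/q_∞(y) ) ν(dy) P(dx), with the conventions 0·log(0/q) = 0 and w·log(w/0) = +∞ for w > 0; all integrals are well defined in (−∞, +∞] since the integrand is bounded below by −q_n(y)/e. -/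
open MeasureTheory ProbabilityTheory ENNReal Filter

noncomputable section
open scoped Classical

/-- The nonnegative (possibly infinite) integrand `w·log(w/q) + q/e`, encoding the
conventions `0·log(0/q) = 0` and `w·log(w/0) = +∞` for `w > 0`. Since
`w·log(w/q) ≥ -q/e`, adding `q/e` makes the integrand `[0,∞]`-valued, and
`∫∫ w·log(w/q) dν dP = (∫∫ (w·log(w/q) + q/e) dν dP) - 1/e` as a value in `(-∞,∞]`
whenever `∫ q dν = 1` and `P` is a probability measure. -/
noncomputable def miIntegrand (w q : ℝ≥0∞) : ℝ≥0∞ :=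
  if w = 0 then q / ENNReal.ofReal (Real.exp 1)
  else if q = 0 then ∞
  else ENNReal.ofReal (w.toReal * Real.log (w.toReal / q.toReal) + q.toReal / Real.exp 1)

/-- The quantity `∫∫ w·log(w/q) dν dP ∈ (-∞,∞]` (equal to the mutual information
`I(P,W)` when `w` is the density of the channel `W` w.r.t. `ν` and `q` the resulting
output marginal density), represented in `EReal`. -/
noncomputable def miValue {X Y : Type*} [MeasurableSpace X] [MeasurableSpace Y]
    (P : Measure X) (ν : Measure Y) (w : X → Y → ℝ≥0∞) : EReal :=
  ((∫⁻ x, ∫⁻ y, miIntegrand (w x y) (∫⁻ x', w x' y ∂P) ∂ν ∂P : ℝ≥0∞) : EReal)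
    - ((1 / Real.exp 1 : ℝ) : EReal)


/-! The shifted integrand `miIntegrand w q = w log (w/q) + q/e` is lower semicontinuous at every
finite point of `[0,∞]²`: it is continuous where `q > 0`, it vanishes at `(0, 0)`, and it tends to
`∞` at `(w, 0)` with `w > 0` since `w log (w/q) + q/e ≥ -1/e - w log q`. The marginals `q_n(y)`
converge to `q_∞(y)` by dominated convergence (everything is bounded by `B` and `P` is finite), so
the integrand of `w_∞` is pointwise below the `liminf` of those of `w_n`, and Fatou's lemma, once in
`y` and once in `x`, bounds the double integrals. Subtracting the constant `1/e` in `EReal`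
preserves the inequality between `liminf`s. -/

open Real Topology

lemma Real.neg_inv_exp_one_le_mul_log {x : ℝ} (hx : 0 ≤ x) : -(Real.exp 1)⁻¹ ≤ x * Real.log x := by
  rcases hx.eq_or_lt with rfl | hx
  · simp [(exp_pos 1).le]
  have key := self_sub_one_le_mul_log (mul_nonneg hx.le (exp_pos 1).le)
  rw [log_mul hx.ne' (exp_pos 1).ne', log_exp] at key
  rw [neg_le, inv_eq_one_div, le_div_iff₀ (exp_pos 1)]
  linarith

lemma miIntegrand_of_ne_zero {w q : ℝ≥0∞} (hq₀ : q ≠ 0) (hq : q ≠ ∞) :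
    miIntegrand w q =
      ENNReal.ofReal (w.toReal * Real.log (w.toReal / q.toReal) + q.toReal / Real.exp 1) := by
  rcases eq_or_ne w 0 with rfl | hw₀
  · simp [miIntegrand, ENNReal.ofReal_div_of_pos (exp_pos 1), ENNReal.ofReal_toReal hq]
  · simp [miIntegrand, hw₀, hq₀]

lemma measurable_miIntegrand : Measurable fun p : ℝ≥0∞ × ℝ≥0∞ => miIntegrand p.1 p.2 := by
  unfold miIntegrand
  refine Measurable.ite (measurable_fst (measurableSet_singleton 0))
    (measurable_snd.div_const _) (Measurable.ite (measurable_snd (measurableSet_singleton 0))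
      measurable_const (ENNReal.measurable_ofReal.comp ?_))
  fun_prop

lemma continuousAt_miIntegrand {w q : ℝ≥0∞} (hw : w ≠ ∞) (hq₀ : q ≠ 0) (hq : q ≠ ∞) :
    ContinuousAt (fun p : ℝ≥0∞ × ℝ≥0∞ => miIntegrand p.1 p.2) (w, q) := by
  have hq_pos : 0 < q.toReal := ENNReal.toReal_pos hq₀ hq
  -- `x log (x/y) = y · φ(x/y)` with `φ t = t log t`, which is continuous also at `0`
  have hg : ContinuousAt
      (fun p : ℝ × ℝ => p.2 * (p.1 / p.2 * Real.log (p.1 / p.2)) + p.2 / Real.exp 1)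
      (w.toReal, q.toReal) := by
    refine ContinuousAt.add (continuousAt_snd.mul ?_) (continuousAt_snd.div_const _)
    exact continuous_mul_log.continuousAt.comp (continuousAt_fst.div continuousAt_snd hq_pos.ne')
  have hpair : ContinuousAt (fun p : ℝ≥0∞ × ℝ≥0∞ => (p.1.toReal, p.2.toReal)) (w, q) :=
    (ENNReal.continuousAt_toReal hw).fst'.prodMk (ENNReal.continuousAt_toReal hq).snd'
  refine (ENNReal.continuous_ofReal.continuousAt.comp (hg.comp_of_eq hpair rfl)).congr ?_
  filter_upwards [continuousAt_snd.eventually_ne hq₀, continuousAt_snd.eventually_ne hq]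
    with p hp₀ hp
  simp only [Function.comp_apply, miIntegrand_of_ne_zero hp₀ hp]
  rw [← mul_assoc, mul_div_cancel₀ _ (ENNReal.toReal_pos hp₀ hp).ne']

lemma ofReal_mul_neg_log_sub_le_miIntegrand {w q : ℝ≥0∞} {c t : ℝ} (hc : 0 < c)
    (hcw : c ≤ w.toReal) (ht : 0 < t) (ht₁ : t ≤ 1) (hqt : q.toReal ≤ t) (hq : q ≠ ∞) :
    ENNReal.ofReal (c * -Real.log t - (Real.exp 1)⁻¹) ≤ miIntegrand w q := by
  have hw : 0 < w.toReal := hc.trans_le hcw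
  rcases eq_or_ne q 0 with rfl | hq₀
  · simp [miIntegrand, (ENNReal.toReal_pos_iff.1 hw).1.ne']
  have hq_pos : 0 < q.toReal := ENNReal.toReal_pos hq₀ hq
  rw [miIntegrand_of_ne_zero hq₀ hq, log_div hw.ne' hq_pos.ne']
  refine ENNReal.ofReal_le_ofReal ?_
  have hlog : -Real.log t ≤ -Real.log q.toReal := neg_le_neg (log_le_log hq_pos hqt)
  have hlog_t : 0 ≤ -Real.log t := neg_nonneg.2 (log_nonpos ht.le ht₁)
  nlinarith [neg_inv_exp_one_le_mul_log hw.le, mul_le_mul hcw hlog hlog_t hw.le,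
    div_nonneg hq_pos.le (exp_pos 1).le]

lemma tendsto_miIntegrand_top {w : ℝ≥0∞} (hw₀ : w ≠ 0) (hw : w ≠ ∞) :
    Tendsto (fun p : ℝ≥0∞ × ℝ≥0∞ => miIntegrand p.1 p.2) (𝓝 (w, 0)) (𝓝 ∞) := by
  set c := w.toReal / 2
  have hc : 0 < c := by have := ENNReal.toReal_pos hw₀ hw; positivity
  have hbound :
      Tendsto (fun t => ENNReal.ofReal (c * -Real.log t - (Real.exp 1)⁻¹)) (𝓝[>] 0) (𝓝 ∞) :=
    ENNReal.tendsto_ofReal_atTop.comp <| tendsto_atTop_add_const_right _ _ <|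
      (tendsto_neg_atBot_atTop.comp tendsto_log_nhdsGT_zero).const_mul_atTop hc
  rw [ENNReal.tendsto_nhds_top_iff_nnreal]
  intro M
  obtain ⟨t, ⟨hMt, ht₁⟩, ht⟩ := ((hbound.eventually (eventually_gt_nhds ENNReal.coe_lt_top)).and
    ((eventually_le_nhds one_pos).filter_mono nhdsWithin_le_nhds) |>.and
      self_mem_nhdsWithin).exists
  have hfst : ∀ᶠ p : ℝ≥0∞ × ℝ≥0∞ in 𝓝 (w, 0), c < p.1.toReal :=
    (ENNReal.continuousAt_toReal hw).fst'.eventually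
      (eventually_gt_nhds (half_lt_self (ENNReal.toReal_pos hw₀ hw)))
  have hsnd : ∀ᶠ p : ℝ≥0∞ × ℝ≥0∞ in 𝓝 (w, 0), p.2.toReal < t :=
    (ENNReal.continuousAt_toReal ENNReal.zero_ne_top).snd'.eventually
      (eventually_lt_nhds (by simpa using ht))
  filter_upwards [hfst, hsnd, continuousAt_snd.eventually_ne ENNReal.zero_ne_top]
    with p hp₁ hp₂ hp
  exact hMt.trans_le (ofReal_mul_neg_log_sub_le_miIntegrand hc hp₁.le ht ht₁ hp₂.le hp)

lemma lowerSemicontinuousAt_miIntegrand {w q : ℝ≥0∞} (hw : w ≠ ∞) (hq : q ≠ ∞) :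
    LowerSemicontinuousAt (fun p : ℝ≥0∞ × ℝ≥0∞ => miIntegrand p.1 p.2) (w, q) := by
  rcases eq_or_ne q 0 with rfl | hq₀
  · rcases eq_or_ne w 0 with rfl | hw₀
    · intro y hy
      simp [miIntegrand] at hy
    · intro y hy
      exact (tendsto_miIntegrand_top hw₀ hw).eventually (eventually_gt_nhds (hy.trans_le le_top))
  · exact (continuousAt_miIntegrand hw hq₀ hq).lowerSemicontinuousAt

lemma miIntegrand_le_liminf {ι : Type*} {l : Filter ι} {w q : ℝ≥0∞} {u v : ι → ℝ≥0∞}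
    (hw : w ≠ ∞) (hq : q ≠ ∞) (hu : Tendsto u l (𝓝 w)) (hv : Tendsto v l (𝓝 q)) :
    miIntegrand w q ≤ liminf (fun i => miIntegrand (u i) (v i)) l := by
  have hcomp : liminf (fun p : ℝ≥0∞ × ℝ≥0∞ => miIntegrand p.1 p.2) (𝓝 (w, q)) ≤
      liminf ((fun p : ℝ≥0∞ × ℝ≥0∞ => miIntegrand p.1 p.2) ∘ fun i => (u i, v i)) l :=
    (hu.prodMk_nhds hv).liminf_le_liminf_comp
  exact (lowerSemicontinuousAt_miIntegrand hw hq).le_liminf.trans hcomp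

lemma MeasureTheory.lintegral_lintegral_le_liminf {X Y : Type*} [MeasurableSpace X]
    [MeasurableSpace Y] {μ : Measure X} {ν : Measure Y} [SFinite ν]
    {F : ℕ → X → Y → ℝ≥0∞} {G : X → Y → ℝ≥0∞} (hF : ∀ n, Measurable (Function.uncurry (F n)))
    (hG : ∀ x y, G x y ≤ liminf (fun n => F n x y) atTop) :
    ∫⁻ x, ∫⁻ y, G x y ∂ν ∂μ ≤ liminf (fun n => ∫⁻ x, ∫⁻ y, F n x y ∂ν ∂μ) atTop :=
  calc ∫⁻ x, ∫⁻ y, G x y ∂ν ∂μ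
      ≤ ∫⁻ x, liminf (fun n => ∫⁻ y, F n x y ∂ν) atTop ∂μ := lintegral_mono fun x =>
        (lintegral_mono (hG x)).trans
          (lintegral_liminf_le fun n => (hF n).comp measurable_prodMk_left)
    _ ≤ liminf (fun n => ∫⁻ x, ∫⁻ y, F n x y ∂ν ∂μ) atTop :=
        lintegral_liminf_le fun n => (hF n).lintegral_prod_right'

lemma EReal.coe_ennreal_sub_le_liminf {ι : Type*} {l : Filter ι} [l.NeBot] {a : ℝ≥0∞}
    {u : ι → ℝ≥0∞} (h : a ≤ liminf u l) (c : EReal) :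
    (a : EReal) - c ≤ liminf (fun i => (u i : EReal) - c) l := by
  have hcoe : ((liminf u l : ℝ≥0∞) : EReal) = liminf (fun i => (u i : EReal)) l :=
    EReal.coe_ennreal_strictMono.monotone.map_liminf_of_continuousAt u
      continuous_coe_ennreal_ereal.continuousAt
  calc (a : EReal) - c ≤ liminf (fun i => (u i : EReal)) l + liminf (fun _ => -c) l := by
        rw [liminf_const, ← sub_eq_add_neg, ← hcoe]
        exact EReal.sub_le_sub (EReal.coe_ennreal_le_coe_ennreal_iff.2 h) le_rfl
    _ ≤ liminf (fun i => (u i : EReal) - c) l := EReal.le_liminf_add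

theorem mutual_information_lower_semicontinuous_general
    {X Y : Type*} [MeasurableSpace X] [MeasurableSpace Y]
    (P : Measure X) [IsProbabilityMeasure P] (ν : Measure Y) [SigmaFinite ν]
    (w : ℕ → X → Y → ℝ≥0∞) (winf : X → Y → ℝ≥0∞)
    (hmeas : ∀ n, Measurable (Function.uncurry (w n)))
    (B : ℝ≥0∞) (hB : B < ∞)
    (hbound : ∀ n x y, w n x y ≤ B) (hboundinf : ∀ x y, winf x y ≤ B)
    (hconv : ∀ x y, Filter.Tendsto (fun n => w n x y) Filter.atTop (nhds (winf x y))) :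
    miValue P ν winf ≤ Filter.liminf (fun n => miValue P ν (w n)) Filter.atTop := by
  have marginal_ne_top {f : X → Y → ℝ≥0∞} (hf : ∀ x y, f x y ≤ B) (y : Y) :
      ∫⁻ x, f x y ∂P ≠ ∞ :=
    ((lintegral_mono (hf · y)).trans_eq (by simp)).trans_lt hB |>.ne
  have marginal_tendsto (y : Y) :
      Tendsto (fun n => ∫⁻ x, w n x y ∂P) atTop (𝓝 (∫⁻ x, winf x y ∂P)) :=
    tendsto_lintegral_of_dominated_convergence (fun _ => B)
      (fun n => (hmeas n).comp measurable_prodMk_right) (fun n => ae_of_all _ (hbound n · y))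
      (by simpa using hB.ne) (ae_of_all _ (hconv · y))
  refine EReal.coe_ennreal_sub_le_liminf
    (lintegral_lintegral_le_liminf (fun n => ?_) fun x y => miIntegrand_le_liminf
      ((hboundinf x y).trans_lt hB).ne (marginal_ne_top hboundinf y) (hconv x y)
      (marginal_tendsto y)) _
  exact measurable_miIntegrand.comp
    ((hmeas n).prodMk ((hmeas n).lintegral_prod_left'.comp measurable_snd))

theorem mutual_information_lower_semicontinuous
    {X Y : Type*} [MeasurableSpace X] [MeasurableSpace Y]
    (P : Measure X) [IsProbabilityMeasure P] (ν : Measure Y) [SigmaFinite ν]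
    (w : ℕ → X → Y → ℝ≥0∞) (winf : X → Y → ℝ≥0∞)
    (hmeas : ∀ n, Measurable (Function.uncurry (w n)))
    (hmeasinf : Measurable (Function.uncurry winf))
    (hnorm : ∀ n x, ∫⁻ y, w n x y ∂ν = 1) (hnorminf : ∀ x, ∫⁻ y, winf x y ∂ν = 1)
    (B : ℝ≥0∞) (hB : B < ∞)
    (hbound : ∀ n x y, w n x y ≤ B) (hboundinf : ∀ x y, winf x y ≤ B)
    (hconv : ∀ x y, Filter.Tendsto (fun n => w n x y) Filter.atTop (nhds (winf x y))) :
    miValue P ν winf ≤ Filter.liminf (fun n => miValue P ν (w n)) Filter.atTop :=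
  mutual_information_lower_semicontinuous_general P ν w winf hmeas B hB hbound hboundinf hconv
end
end
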